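/- Given the RMM Yang–Baxter relation of the five-vertex model, one has for pairwise distinct y₁,…,yₙ and x ∉ {y₁,…,yₙ}: A(x)B(y₁)⋯B(yₙ) = [∏ᵢ(x⊖yᵢ)]⁻¹·B(y₁)⋯B(yₙ)A(x) − Σᵢ [(x⊖yᵢ)∏_{j≠i}(yᵢ⊖y_j)]⁻¹·B(y₁)⋯B(x)⋯B(yₙ)A(yᵢ), where in the i-th summand B(yᵢ) is replaced by B(x). -/

import Mathlib

open Finset

/-- A 2×2 monodromy matrix `M = [[A,B],[C,D]]` with entries in a
noncommutative algebra. -/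
def Mmat14 {A : Type*} [Ring A] (Aa Bb Cc Dd : A) : Matrix Bool Bool A :=
  Matrix.of fun a b =>
    match a, b with
    | false, false => Aa
    | false, true => Bb
    | true, false => Cc
    | true, true => Dd

/-- Embedding into factor 1 of the two-fold auxiliary space. -/
def emb13of14 {A : Type*} [Ring A] (M : Matrix Bool Bool A) :
    Matrix (Bool × Bool) (Bool × Bool) A :=
  Matrix.of fun p q => if p.2 = q.2 then M p.1 q.1 else 0

/-- Embedding into factor 2. -/
def emb23of14 {A : Type*} [Ring A] (M : Matrix Bool Bool A) :
    Matrix (Bool × Bool) (Bool × Bool) A :=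
  Matrix.of fun p q => if p.1 = q.1 then M p.2 q.2 else 0

/-- The five-vertex `R`-matrix `a=1, b=0, c=1, c'=cp, b'=bp, a'=1`. -/
def Rmat14 (K : Type*) {A : Type*} [CommSemiring K] [Ring A] [Algebra K A]
    (bp cp : K) : Matrix (Bool × Bool) (Bool × Bool) A :=
  Matrix.of fun p q =>
    match p, q with
    | (false, false), (false, false) => 1
    | (false, true), (true, false) => 1
    | (true, false), (false, true) => algebraMap K A cp
    | (true, false), (true, false) => algebraMap K A bp
    | (true, true), (true, true) => 1
    | _, _ => 0

/-- Formal subtraction `u ⊖ v = (u - v)/(1 + β v)`. -/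
noncomputable def omin14 {K : Type*} [Field K] (β u v : K) : K := (u - v) / (1 + β * v)


lemma omin14_ne_zero {K : Type*} [Field K] {β u v : K} (huv : u ≠ v) (hv : 1 + β * v ≠ 0) :
    omin14 β u v ≠ 0 :=
  div_ne_zero (sub_ne_zero.mpr huv) hv

lemma pf14 {K : Type*} [Field K] (β a b c : K) (hab : a ≠ b) (hac : a ≠ c) (hbc : b ≠ c)
    (h1 : 1 + β * a ≠ 0) (h2 : 1 + β * b ≠ 0) (h3 : 1 + β * c ≠ 0) :
    (omin14 β a b)⁻¹ * (omin14 β b c)⁻¹ - (omin14 β a b)⁻¹ * (omin14 β a c)⁻¹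
      = -((omin14 β a c)⁻¹ * (omin14 β c b)⁻¹) := by
  have h4 : a - b ≠ 0 := sub_ne_zero.mpr hab
  have h5 : a - c ≠ 0 := sub_ne_zero.mpr hac
  have h6 : b - c ≠ 0 := sub_ne_zero.mpr hbc
  have h7 : c - b ≠ 0 := sub_ne_zero.mpr (Ne.symm hbc)
  unfold omin14
  field_simp
  ring

lemma zero_ne_succ14 {n : ℕ} (k : Fin n) : (0 : Fin (n+1)) ≠ k.succ :=
  (Fin.succ_ne_zero k).symm

lemma prod_erase_zero14 {M : Type*} [CommMonoid M] (n : ℕ) (g : Fin (n+1) → M) :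
    ∏ j ∈ univ.erase (0 : Fin (n+1)), g j = ∏ j : Fin n, g j.succ := by
  rw [Fin.univ_succ, Finset.erase_cons, Finset.prod_map]
  rfl

lemma prod_erase_succ14 {M : Type*} [CommMonoid M] (n : ℕ) (g : Fin (n+1) → M) (k : Fin n) :
    ∏ j ∈ univ.erase k.succ, g j = g 0 * ∏ j ∈ univ.erase k, g j.succ := by
  rw [Fin.univ_succ, Finset.erase_cons_of_ne _ (zero_ne_succ14 k), Finset.prod_cons]
  congr 1
  have h : (Finset.univ.erase k).map ⟨Fin.succ, Fin.succ_injective n⟩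
      = (Finset.univ.map ⟨Fin.succ, Fin.succ_injective n⟩).erase k.succ :=
    Finset.map_erase _ _ _
  rw [← h, Finset.prod_map]
  rfl

lemma Bswap14 {K A : Type*} [Field K] [Ring A] (Bop : K → A)
    (hBB : ∀ u v : K, Bop u * Bop v = Bop v * Bop u) :
    ∀ (n : ℕ) (z : Fin n → K) (k : Fin n) (a b : K),
    Bop a * (List.ofFn fun j => Bop (if j = k then b else z j)).prod
      = Bop b * (List.ofFn fun j => Bop (if j = k then a else z j)).prod := by
  intro n
  induction n with
  | zero => intro z k; exact k.elim0
  | succ n ih =>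
    intro z k a b
    refine Fin.cases ?_ ?_ k
    · simp only [List.ofFn_succ, List.prod_cons, Fin.succ_ne_zero, if_neg, ite_false,
        if_true, ite_true]
      rw [← mul_assoc, ← mul_assoc, hBB a b]
    · intro m
      simp only [List.ofFn_succ, List.prod_cons]
      have h0 : ∀ c : K, (if (0 : Fin (n+1)) = m.succ then c else z 0) = z 0 := by
        intro c; rw [if_neg (Fin.succ_ne_zero m).symm]
      have ht : ∀ c : K, (fun i : Fin n => Bop (if i.succ = m.succ then c else z i.succ))
          = fun i : Fin n => Bop (if i = m then c else (fun i : Fin n => z i.succ) i) := by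
        intro c; funext i; simp [Fin.succ_inj]
      rw [h0, h0, ht, ht, ← mul_assoc, hBB a (z 0), mul_assoc, ih _ m a b,
        ← mul_assoc, hBB (z 0) b, mul_assoc]


lemma aux14 {K A : Type*} [Field K] [Ring A] [Algebra K A] (β : K) (Aop Bop : K → A)
    (hAB : ∀ u v : K, 1 + β * u ≠ 0 → 1 + β * v ≠ 0 →
      omin14 β u v • (Aop u * Bop v) = Bop v * Aop u - Bop u * Aop v)
    (hBB : ∀ u v : K, Bop u * Bop v = Bop v * Bop u) :
    ∀ (n : ℕ) (x : K) (y : Fin n → K), (∀ i j, i ≠ j → y i ≠ y j) → (∀ i, x ≠ y i) →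
      (∀ i, 1 + β * y i ≠ 0) → (1 + β * x ≠ 0) →
    Aop x * (List.ofFn fun i : Fin n => Bop (y i)).prod
      = (∏ i : Fin n, omin14 β x (y i))⁻¹
          • ((List.ofFn fun i : Fin n => Bop (y i)).prod * Aop x)
        - ∑ i : Fin n,
            (omin14 β x (y i) * ∏ j ∈ Finset.univ.erase i, omin14 β (y i) (y j))⁻¹
              • ((List.ofFn fun j : Fin n => Bop (if j = i then x else y j)).prod
                  * Aop (y i)) := by
  intro n
  induction n with
  | zero => intro x y _ _ _ _; simp
  | succ n ih =>
    intro x y hy hxy hβy hβx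
    have hy' : ∀ i j : Fin n, i ≠ j → y i.succ ≠ y j.succ := fun i j hij =>
      hy _ _ (fun h => hij (Fin.succ_injective n h))
    have hxy' : ∀ i : Fin n, x ≠ y i.succ := fun i => hxy i.succ
    have hβy' : ∀ i : Fin n, 1 + β * y i.succ ≠ 0 := fun i => hβy i.succ
    have hy0 : ∀ i : Fin n, y 0 ≠ y i.succ := fun i => hy 0 i.succ (Fin.succ_ne_zero i).symm
    have hβ0 : 1 + β * y 0 ≠ 0 := hβy 0
    have hω0 : omin14 β x (y 0) ≠ 0 := omin14_ne_zero (hxy 0) hβ0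
    have IH1 := ih x (fun i => y i.succ) hy' hxy' hβy' hβx
    have IH2 := ih (y 0) (fun i => y i.succ) hy' hy0 hβy' hβ0
    have step1 : Aop x * Bop (y 0)
        = (omin14 β x (y 0))⁻¹ • (Bop (y 0) * Aop x - Bop x * Aop (y 0)) := by
      rw [← hAB x (y 0) hβx hβ0, inv_smul_smul₀ hω0]
    rw [List.ofFn_succ, List.prod_cons, ← mul_assoc, step1, smul_mul_assoc, sub_mul,
      mul_assoc, mul_assoc, IH1, IH2]
    simp only [Fin.prod_univ_succ, Fin.sum_univ_succ, prod_erase_zero14, prod_erase_succ14,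
      List.ofFn_succ, List.prod_cons, Fin.succ_ne_zero, zero_ne_succ14, if_neg, ite_false,
      if_pos, ite_true, Fin.succ_inj]
    have hA1 : (omin14 β x (y 0))⁻¹ • (Bop (y 0) *
          ((∏ i : Fin n, omin14 β x (y i.succ))⁻¹
            • ((List.ofFn fun i : Fin n => Bop (y i.succ)).prod * Aop x)))
        = (omin14 β x (y 0) * ∏ i : Fin n, omin14 β x (y i.succ))⁻¹
            • (Bop (y 0) * (List.ofFn fun i : Fin n => Bop (y i.succ)).prod * Aop x) := by
      rw [mul_smul_comm, smul_smul, mul_inv, mul_assoc]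
    have hA2 : (omin14 β x (y 0))⁻¹ • (Bop x *
          ((∏ i : Fin n, omin14 β (y 0) (y i.succ))⁻¹
            • ((List.ofFn fun i : Fin n => Bop (y i.succ)).prod * Aop (y 0))))
        = (omin14 β x (y 0) * ∏ i : Fin n, omin14 β (y 0) (y i.succ))⁻¹
            • (Bop x * (List.ofFn fun i : Fin n => Bop (y i.succ)).prod * Aop (y 0)) := by
      rw [mul_smul_comm, smul_smul, mul_inv, mul_assoc]
    have hS : ∀ k : Fin n,
        (omin14 β x (y k.succ) * (omin14 β (y k.succ) (y 0)
            * ∏ j ∈ Finset.univ.erase k, omin14 β (y k.succ) (y j.succ)))⁻¹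
          • (Bop (y 0) * (List.ofFn fun j : Fin n => Bop (if j = k then x else y j.succ)).prod
              * Aop (y k.succ))
        = (omin14 β x (y 0))⁻¹ • (Bop (y 0) *
            ((omin14 β x (y k.succ)
                * ∏ j ∈ Finset.univ.erase k, omin14 β (y k.succ) (y j.succ))⁻¹
              • ((List.ofFn fun j : Fin n => Bop (if j = k then x else y j.succ)).prod
                  * Aop (y k.succ))))
          - (omin14 β x (y 0))⁻¹ • (Bop x *
            ((omin14 β (y 0) (y k.succ)
                * ∏ j ∈ Finset.univ.erase k, omin14 β (y k.succ) (y j.succ))⁻¹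
              • ((List.ofFn fun j : Fin n => Bop (if j = k then y 0 else y j.succ)).prod
                  * Aop (y k.succ)))) := by
      intro k
      have hpf := pf14 β x (y 0) (y k.succ) (hxy 0) (hxy k.succ) (hy0 k) hβx hβ0 (hβy k.succ)
      have hswap : Bop x * (List.ofFn fun j : Fin n => Bop (if j = k then y 0 else y j.succ)).prod
          = Bop (y 0) * (List.ofFn fun j : Fin n => Bop (if j = k then x else y j.succ)).prod :=
        Bswap14 Bop hBB n (fun j => y j.succ) k x (y 0)
      rw [mul_smul_comm, mul_smul_comm, smul_smul, smul_smul,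
        ← mul_assoc (Bop (y 0)), ← mul_assoc (Bop x), hswap, ← sub_smul]
      congr 1
      simp only [mul_inv]
      linear_combination (∏ j ∈ Finset.univ.erase k, omin14 β (y k.succ) (y j.succ))⁻¹ * hpf
    have hsum : (∑ k : Fin n,
        (omin14 β x (y k.succ) * (omin14 β (y k.succ) (y 0)
            * ∏ j ∈ Finset.univ.erase k, omin14 β (y k.succ) (y j.succ)))⁻¹
          • (Bop (y 0) * (List.ofFn fun j : Fin n => Bop (if j = k then x else y j.succ)).prod
              * Aop (y k.succ)))
        = (∑ k : Fin n, (omin14 β x (y 0))⁻¹ • (Bop (y 0) *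
            ((omin14 β x (y k.succ)
                * ∏ j ∈ Finset.univ.erase k, omin14 β (y k.succ) (y j.succ))⁻¹
              • ((List.ofFn fun j : Fin n => Bop (if j = k then x else y j.succ)).prod
                  * Aop (y k.succ)))))
          - ∑ k : Fin n, (omin14 β x (y 0))⁻¹ • (Bop x *
            ((omin14 β (y 0) (y k.succ)
                * ∏ j ∈ Finset.univ.erase k, omin14 β (y k.succ) (y j.succ))⁻¹
              • ((List.ofFn fun j : Fin n => Bop (if j = k then y 0 else y j.succ)).prod
                  * Aop (y k.succ)))) := by
      rw [← Finset.sum_sub_distrib]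
      exact Finset.sum_congr rfl fun k _ => hS k
    rw [← hA1, ← hA2, hsum]
    simp only [mul_sub, Finset.mul_sum, smul_sub, Finset.smul_sum]
    abel

/-- Given the RMM Yang–Baxter relation of the five-vertex model, for pairwise
distinct `y₁,…,yₙ` and `x ∉ {y₁,…,yₙ}`:
`A(x) B(y₁)⋯B(yₙ) = [∏ᵢ(x⊖yᵢ)]⁻¹ B(y₁)⋯B(yₙ) A(x)
  − Σᵢ [(x⊖yᵢ) ∏_{j≠i}(yᵢ⊖y_j)]⁻¹ B(y₁)⋯B(x)⋯B(yₙ) A(yᵢ)`,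
where in the `i`-th summand `B(yᵢ)` is replaced by `B(x)`. -/
theorem A_through_B_string {K A : Type*} [Field K] [Ring A] [Algebra K A]
    (β : K) (n : ℕ) (Aop Bop Cop Dop : K → A) (x : K) (y : Fin n → K)
    (hy : ∀ i j, i ≠ j → y i ≠ y j) (hxy : ∀ i, x ≠ y i)
    (hβy : ∀ i, 1 + β * y i ≠ 0) (hβx : 1 + β * x ≠ 0)
    (hRMM : ∀ u v : K,
      Rmat14 K (omin14 β v u) (1 + β * omin14 β v u)
          * emb13of14 (Mmat14 (Aop u) (Bop u) (Cop u) (Dop u))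
          * emb23of14 (Mmat14 (Aop v) (Bop v) (Cop v) (Dop v))
        = emb23of14 (Mmat14 (Aop v) (Bop v) (Cop v) (Dop v))
          * emb13of14 (Mmat14 (Aop u) (Bop u) (Cop u) (Dop u))
          * Rmat14 K (omin14 β v u) (1 + β * omin14 β v u)) :
    Aop x * (List.ofFn fun i : Fin n => Bop (y i)).prod
      = (∏ i : Fin n, omin14 β x (y i))⁻¹
          • ((List.ofFn fun i : Fin n => Bop (y i)).prod * Aop x)
        - ∑ i : Fin n,
            (omin14 β x (y i) * ∏ j ∈ Finset.univ.erase i, omin14 β (y i) (y j))⁻¹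
              • ((List.ofFn fun j : Fin n => Bop (if j = i then x else y j)).prod
                  * Aop (y i)) := by
  have hBB : ∀ u v : K, Bop u * Bop v = Bop v * Bop u := by
    intro u v
    have h3 := congrFun (congrFun (hRMM u v) (false, false)) (true, true)
    simpa [Matrix.mul_apply, Fintype.sum_prod_type, Rmat14, emb13of14, emb23of14, Mmat14]
      using h3
  have hAB : ∀ u v : K, 1 + β * u ≠ 0 → 1 + β * v ≠ 0 →
      omin14 β u v • (Aop u * Bop v) = Bop v * Aop u - Bop u * Aop v := by
    intro u v hu hv
    have h1 := congrFun (congrFun (hRMM u v) (false, false)) (false, true)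
    have h2 := congrFun (congrFun (hRMM u v) (false, false)) (true, false)
    simp only [Matrix.mul_apply, Fintype.sum_prod_type, Rmat14, emb13of14, emb23of14, Mmat14,
      Matrix.of_apply, Fintype.sum_bool] at h1 h2
    simp at h1 h2
    -- h1 : Aop u * Bop v = Aop v * Bop u * (1 + algebraMap β * algebraMap (omin14 β v u))
    -- h2 : Bop u * Aop v = Aop v * Bop u * algebraMap (omin14 β v u) + Bop v * Aop u
    have hc : (1 : K) + β * omin14 β v u = (1 + β * v) / (1 + β * u) := by
      unfold omin14; field_simp; ring
    have hcne : (1 : K) + β * omin14 β v u ≠ 0 := by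
      rw [hc]; exact div_ne_zero hv hu
    have hkey : omin14 β v u * ((1 : K) + β * omin14 β v u)⁻¹ = -omin14 β u v := by
      rw [hc]; unfold omin14; field_simp
      rw [mul_comm (v - u), mul_div_mul_left _ _ (by rw [mul_comm]; exact hu), ← neg_div, neg_sub]
    have hcomm : ∀ (r : K) (z : A), z * algebraMap K A r = r • z := fun r z => by
      rw [Algebra.smul_def, Algebra.commutes]
    have hmap : (1 : A) + algebraMap K A β * algebraMap K A (omin14 β v u)
        = algebraMap K A (1 + β * omin14 β v u) := by
      rw [map_add, map_one, map_mul]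
    rw [hmap, hcomm] at h1
    rw [hcomm] at h2
    have h1' : Aop v * Bop u = ((1 : K) + β * omin14 β v u)⁻¹ • (Aop u * Bop v) := by
      rw [h1, inv_smul_smul₀ hcne]
    rw [h2, h1', smul_smul, hkey, neg_smul]
    abel
  exact aux14 β Aop Bop hAB hBB n x y hy hxy hβy hβx
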